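/- arXiv:1604.03267 — 6 statements merged into one kernel-verified Lean document; each statement's English description precedes it below -/
import Mathlib

section
/- If K ⊆ C ⊆ L_m(G) and K is conormal with respect to G, P₁, P₂, then K is C̄-coobservable with respect to G, P₁, P₂, Σ_{c,1}, Σ_{c,2}. -/
/-! Languages over a finite alphabet `α`: strings are `List α`.
`So1, So2` are the observable event subsets `Σ_{o,1}, Σ_{o,2}`;
`Sc1, Sc2` are the controllable event subsets `Σ_{c,1}, Σ_{c,2}`. -/

variable {α : Type*}

/-- Prefix closure `L̄` of a language `L`. -/
def pcl (L : Set (List α)) : Set (List α) := {s | ∃ t ∈ L, s <+: t}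

/-- Natural projection onto the observable event subset `A`:
keeps events in `A`, erases events not in `A`. -/
noncomputable def natProj (A : Set α) : List α → List α :=
  fun s => s.filter (fun a => @decide (a ∈ A) (Classical.propDecidable _))

/-- `K` is relatively coobservable (`C̄`-coobservable) w.r.t. the plant
(closed behavior `LG`), projections `P₁ = natProj So1`, `P₂ = natProj So2`,
and controllable event subsets `Sc1`, `Sc2` (Definition 1). -/
def RelCoobs (LG C K : Set (List α)) (So1 So2 Sc1 Sc2 : Set α) : Prop :=
  ∀ s s' s'' : List α,
    natProj So1 s = natProj So1 s' → natProj So2 s = natProj So2 s'' →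
    ((∀ σ ∈ Sc1 ∩ Sc2,
        (s' ++ [σ] ∈ pcl K ∧ s ∈ pcl C ∧ s ++ [σ] ∈ LG → s ++ [σ] ∈ pcl K) ∧
        (s'' ++ [σ] ∈ pcl K ∧ s ∈ pcl C ∧ s ++ [σ] ∈ LG → s ++ [σ] ∈ pcl K)) ∧
     (∀ σ ∈ Sc1 \ Sc2,
        s' ++ [σ] ∈ pcl K ∧ s ∈ pcl C ∧ s ++ [σ] ∈ LG → s ++ [σ] ∈ pcl K) ∧
     (∀ σ ∈ Sc2 \ Sc1,
        s'' ++ [σ] ∈ pcl K ∧ s ∈ pcl C ∧ s ++ [σ] ∈ LG → s ++ [σ] ∈ pcl K))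

/-- `K` is conormal w.r.t. `LG`, `P₁ = natProj So1`, `P₂ = natProj So2`:
`(P₁⁻¹P₁(K̄) ∪ P₂⁻¹P₂(K̄)) ∩ L(G) = K̄`. -/
def Conormal (LG K : Set (List α)) (So1 So2 : Set α) : Prop :=
  (natProj So1 ⁻¹' (natProj So1 '' pcl K) ∪ natProj So2 ⁻¹' (natProj So2 '' pcl K)) ∩ LG
    = pcl K

/-- if `K ⊆ C ⊆ Lm(G)` and `K` is conormal, then `K` is `C̄`-coobservable. -/
theorem conormal_implies_relCoobs {E : Type*} [Fintype E]
    (LmG LG C K : Set (List E)) (So1 So2 Sc1 Sc2 : Set E)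
    (hG : pcl LmG = LG) (hCG : C ⊆ LmG) (hKC : K ⊆ C)
    (h : Conormal LG K So1 So2) :
    RelCoobs LG C K So1 So2 Sc1 Sc2 := by
  intro s s' s'' h1 h2
  have key1 : ∀ σ : E, s' ++ [σ] ∈ pcl K → s ++ [σ] ∈ LG → s ++ [σ] ∈ pcl K := by
    intro σ hs' hLG
    rw [← h]
    refine ⟨Or.inl ⟨s' ++ [σ], hs', ?_⟩, hLG⟩
    simp only [natProj, List.filter_append]
    simp only [natProj] at h1
    rw [h1]
  have key2 : ∀ σ : E, s'' ++ [σ] ∈ pcl K → s ++ [σ] ∈ LG → s ++ [σ] ∈ pcl K := by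
    intro σ hs'' hLG
    rw [← h]
    refine ⟨Or.inr ⟨s'' ++ [σ], hs'', ?_⟩, hLG⟩
    simp only [natProj, List.filter_append]
    simp only [natProj] at h2
    rw [h2]
  exact ⟨fun σ _ => ⟨fun ⟨a,_,c⟩ => key1 σ a c, fun ⟨a,_,c⟩ => key2 σ a c⟩,
    fun σ _ ⟨a,_,c⟩ => key1 σ a c, fun σ _ ⟨a,_,c⟩ => key2 σ a c⟩
end

section
/- Let I be a finite index set of decentralized supervisors and let K_α ⊆ C ⊆ L_m(G) for α ranging over an arbitrary index set A, where each K_α is C̄-coobservable with respect to G, the projections P_i and controllable event subsets Σ_{c,i} (i ∈ I). Then the union K = ⋃_{α ∈ A} K_α is also C̄-coobservable. -/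
variable {α : Type*}

def RelObs (LG C K : Set (List α)) (So Sc : Set α) : Prop :=
  ∀ s s' : List α, ∀ σ ∈ Sc,
    natProj So s = natProj So s' → s' ++ [σ] ∈ pcl K → s ∈ pcl C →
      s ++ [σ] ∈ LG → s ++ [σ] ∈ pcl K

def RelCoobsI {I : Type*} (LG C K : Set (List α)) (So Sc : I → Set α) : Prop :=
  ∀ i : I, RelObs LG C K (So i) (Sc i)

/-- an arbitrary union of `C̄`-coobservable languages is
`C̄`-coobservable. -/
theorem relCoobs_union {E : Type*} [Fintype E] {I : Type*} [Fintype I]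
    (LmG LG C : Set (List E)) (So Sc : I → Set E)
    (hG : pcl LmG = LG) (hCG : C ⊆ LmG)
    {A : Type*} (Kf : A → Set (List E))
    (hsub : ∀ a : A, Kf a ⊆ C)
    (hco : ∀ a : A, RelCoobsI LG C (Kf a) So Sc) :
    RelCoobsI LG C (⋃ a : A, Kf a) So Sc := by
  intro i s s' σ hσ hproj hK hC hLG
  obtain ⟨t, ht, hpre⟩ := hK
  obtain ⟨a, hta⟩ := Set.mem_iUnion.mp ht
  obtain ⟨u, hu, hpu⟩ := hco a i s s' σ hσ hproj ⟨t, hta, hpre⟩ hC hLG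
  exact ⟨u, Set.mem_iUnion.mpr ⟨a, hu⟩, hpu⟩
end

section
/- Let K ⊆ C ⊆ L_m(G) and let 𝒪(K,C) be the family of all C̄-coobservable sublanguages of K. Then 𝒪(K,C) is nonempty (it contains the empty language), and the union sup𝒪(K,C) = ⋃{K' | K' ∈ 𝒪(K,C)} is itself a member of 𝒪(K,C); hence sup𝒪(K,C) is the unique supremal element of 𝒪(K,C): it is a C̄-coobservable sublanguage of K containing every C̄-coobservable sublanguage of K. -/
/-! Languages over a finite alphabet `α`: strings are `List α`.
`So i` is the observable event subset `Σ_{o,i}` and `Sc i` the controllable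
event subset `Σ_{c,i}` of decentralized supervisor `i ∈ I`. -/

variable {α : Type*}

/-- `𝒪(K,C)`: the family of `C̄`-coobservable sublanguages of `K`. -/
def coobsFamily {I : Type*} (LG C K : Set (List α)) (So Sc : I → Set α) :
    Set (Set (List α)) :=
  {K' | K' ⊆ K ∧ RelCoobsI LG C K' So Sc}

/-- `𝒪(K,C)` is nonempty (contains `∅`), its union
`sup𝒪(K,C) = ⋃₀ 𝒪(K,C)` is itself a member, and hence is the unique supremal
element: a `C̄`-coobservable sublanguage of `K` containing every
`C̄`-coobservable sublanguage of `K`. -/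
theorem sup_relCoobs_exists {E : Type*} [Fintype E] {I : Type*} [Fintype I]
    (LmG LG C K : Set (List E)) (So Sc : I → Set E)
    (hG : pcl LmG = LG) (hCG : C ⊆ LmG) (hKC : K ⊆ C) :
    ∅ ∈ coobsFamily LG C K So Sc ∧
    ⋃₀ coobsFamily LG C K So Sc ∈ coobsFamily LG C K So Sc ∧
    (∀ K' ∈ coobsFamily LG C K So Sc, K' ⊆ ⋃₀ coobsFamily LG C K So Sc) ∧
    (∀ M ∈ coobsFamily LG C K So Sc,
      (∀ K' ∈ coobsFamily LG C K So Sc, K' ⊆ M) →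
        M = ⋃₀ coobsFamily LG C K So Sc) := by

  have hpmono : ∀ (A B : Set (List E)), A ⊆ B → pcl A ⊆ pcl B := by
    rintro A B hAB s ⟨t, ht, hp⟩
    exact ⟨t, hAB ht, hp⟩
  have hempty : (∅ : Set (List E)) ∈ coobsFamily LG C K So Sc := by
    refine ⟨Set.empty_subset _, fun i s s' σ hσ hP hs' _ _ => ?_⟩
    obtain ⟨t, ht, _⟩ := hs'
    exact absurd ht (Set.notMem_empty t)
  have hmem : ⋃₀ coobsFamily LG C K So Sc ∈ coobsFamily LG C K So Sc := by
    constructor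
    · rintro s ⟨K', hK', hs⟩
      exact hK'.1 hs
    · intro i s s' σ hσ hP hs' hsC hLG
      obtain ⟨t, ⟨K', hK', htK'⟩, hp⟩ := hs'
      have : s ++ [σ] ∈ pcl K' := hK'.2 i s s' σ hσ hP ⟨t, htK', hp⟩ hsC hLG
      exact hpmono K' _ (Set.subset_sUnion_of_mem hK') this
  refine ⟨hempty, hmem, fun K' hK' => Set.subset_sUnion_of_mem hK', ?_⟩
  intro M hM hmax
  exact le_antisymm (Set.subset_sUnion_of_mem hM) (Set.sUnion_subset fun K' hK' => hmax K' hK')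
end

section
/- Let K ⊆ C ⊆ L_m(G) be a nonempty specification language. The family of sublanguages of K that are simultaneously C̄-coobservable, controllable with respect to G, and L_m(G)-closed is closed under arbitrary unions; consequently this family contains a unique supremal element K↑, namely the union of all its members, and K↑ is itself C̄-coobservable, controllable, and L_m(G)-closed. -/
/-! Languages over a finite alphabet `α`: strings are `List α`.
`So i` is the observable event subset `Σ_{o,i}` and `Sc i` the controllable
event subset `Σ_{c,i}` of decentralized supervisor `i ∈ I`. -/

variable {α : Type*}

/-- `K` is controllable w.r.t. the plant closed behavior `LG` and
uncontrollable events `Su`: `K̄·Σu ∩ L(G) ⊆ K̄`. -/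
def Controllable (LG : Set (List α)) (Su : Set α) (K : Set (List α)) : Prop :=
  ∀ s : List α, ∀ σ ∈ Su, s ∈ pcl K → s ++ [σ] ∈ LG → s ++ [σ] ∈ pcl K

/-- `K` is `Lm(G)`-closed: `K̄ ∩ Lm(G) = K`. -/
def LmClosed (LmG K : Set (List α)) : Prop := pcl K ∩ LmG = K


lemma pcl_sUnion_mem {F : Set (Set (List α))} {s : List α} :
    s ∈ pcl (⋃₀ F) ↔ ∃ K' ∈ F, s ∈ pcl K' := by
  constructor
  · rintro ⟨t, ⟨K', hK', htK'⟩, hpre⟩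
    exact ⟨K', hK', t, htK', hpre⟩
  · rintro ⟨K', hK', t, ht, hpre⟩
    exact ⟨t, ⟨K', hK', ht⟩, hpre⟩

/-- the family of sublanguages of `K` that are `C̄`-coobservable,
controllable, and `Lm(G)`-closed is closed under arbitrary unions; hence it
contains a unique supremal element `K↑ = ⋃₀` (the family), itself
`C̄`-coobservable, controllable, and `Lm(G)`-closed. -/
theorem sup_relCoobs_controllable_closed {E : Type*} [Fintype E]
    {I : Type*} [Fintype I]
    (LmG LG C K : Set (List E)) (So Sc : I → Set E)
    (hG : pcl LmG = LG) (hCG : C ⊆ LmG) (hKC : K ⊆ C) (hne : K.Nonempty) :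
    (∀ F : Set (Set (List E)),
      (∀ K' ∈ F, K' ⊆ K ∧ RelCoobsI LG C K' So Sc ∧
        Controllable LG (⋃ i : I, Sc i)ᶜ K' ∧ LmClosed LmG K') →
      (⋃₀ F ⊆ K ∧ RelCoobsI LG C (⋃₀ F) So Sc ∧
        Controllable LG (⋃ i : I, Sc i)ᶜ (⋃₀ F) ∧ LmClosed LmG (⋃₀ F))) ∧
    (∃ Ksup : Set (List E),
      (Ksup ⊆ K ∧ RelCoobsI LG C Ksup So Sc ∧
        Controllable LG (⋃ i : I, Sc i)ᶜ Ksup ∧ LmClosed LmG Ksup) ∧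
      Ksup = ⋃₀ {K' | K' ⊆ K ∧ RelCoobsI LG C K' So Sc ∧
        Controllable LG (⋃ i : I, Sc i)ᶜ K' ∧ LmClosed LmG K'} ∧
      (∀ K', K' ⊆ K → RelCoobsI LG C K' So Sc →
        Controllable LG (⋃ i : I, Sc i)ᶜ K' → LmClosed LmG K' → K' ⊆ Ksup)) := by
  have main : ∀ F : Set (Set (List E)),
      (∀ K' ∈ F, K' ⊆ K ∧ RelCoobsI LG C K' So Sc ∧
        Controllable LG (⋃ i : I, Sc i)ᶜ K' ∧ LmClosed LmG K') →
      (⋃₀ F ⊆ K ∧ RelCoobsI LG C (⋃₀ F) So Sc ∧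
        Controllable LG (⋃ i : I, Sc i)ᶜ (⋃₀ F) ∧ LmClosed LmG (⋃₀ F)) := by
    intro F hF
    refine ⟨?_, ?_, ?_, ?_⟩
    · intro s ⟨K', hK', hs⟩
      exact (hF K' hK').1 hs
    · intro i s s' σ hσ hproj hs' hsC hsG
      obtain ⟨K', hK', hmem⟩ := pcl_sUnion_mem.mp hs'
      exact pcl_sUnion_mem.mpr ⟨K', hK',
        (hF K' hK').2.1 i s s' σ hσ hproj hmem hsC hsG⟩
    · intro s σ hσ hs hsG
      obtain ⟨K', hK', hmem⟩ := pcl_sUnion_mem.mp hs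
      exact pcl_sUnion_mem.mpr ⟨K', hK',
        (hF K' hK').2.2.1 s σ hσ hmem hsG⟩
    · ext s
      constructor
      · rintro ⟨hp, hLm⟩
        obtain ⟨K', hK', hmem⟩ := pcl_sUnion_mem.mp hp
        exact ⟨K', hK', ((hF K' hK').2.2.2 ▸ (⟨hmem, hLm⟩ : s ∈ pcl K' ∩ LmG))⟩
      · rintro ⟨K', hK', hs⟩
        have := ((hF K' hK').2.2.2).symm ▸ hs
        exact ⟨pcl_sUnion_mem.mpr ⟨K', hK', this.1⟩, this.2⟩
  refine ⟨main, ⟨_, main _ (fun K' h => h), rfl, ?_⟩⟩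
  intro K' h1 h2 h3 h4 s hs
  exact ⟨K', ⟨h1, h2, h3, h4⟩, hs⟩
end

section
/- The converse of Proposition 1 fails: there exist a finite alphabet Σ, a plant G (languages L_m(G), L(G) with L̄_m(G) = L(G)), observable event subsets Σ_{o,1}, Σ_{o,2} ⊆ Σ with natural projections P₁, P₂, controllable event subsets Σ_{c,1}, Σ_{c,2} ⊆ Σ, an ambient language C ⊆ L_m(G), and a language K ⊆ C such that K is coobservable with respect to G, P₁, P₂, Σ_{c,1}, Σ_{c,2} but K is not C̄-coobservable. -/
/-! Languages over a finite alphabet `α`: strings are `List α`.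
`So1, So2` are the observable event subsets `Σ_{o,1}, Σ_{o,2}`;
`Sc1, Sc2` are the controllable event subsets `Σ_{c,1}, Σ_{c,2}`. -/

variable {α : Type*}

/-- `K` is (conjunctively) coobservable w.r.t. `LG`, `P₁`, `P₂`, `Sc1`, `Sc2`. -/
def Coobs (LG K : Set (List α)) (So1 So2 Sc1 Sc2 : Set α) : Prop :=
  ∀ s s' s'' : List α,
    natProj So1 s = natProj So1 s' → natProj So2 s = natProj So2 s'' →
    ((∀ σ ∈ Sc1 ∩ Sc2,
        (s' ++ [σ] ∈ pcl K ∧ s ∈ pcl K ∧ s ++ [σ] ∈ LG → s ++ [σ] ∈ pcl K) ∨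
        (s'' ++ [σ] ∈ pcl K ∧ s ∈ pcl K ∧ s ++ [σ] ∈ LG → s ++ [σ] ∈ pcl K)) ∧
     (∀ σ ∈ Sc1 \ Sc2,
        s' ++ [σ] ∈ pcl K ∧ s ∈ pcl K ∧ s ++ [σ] ∈ LG → s ++ [σ] ∈ pcl K) ∧
     (∀ σ ∈ Sc2 \ Sc1,
        s'' ++ [σ] ∈ pcl K ∧ s ∈ pcl K ∧ s ++ [σ] ∈ LG → s ++ [σ] ∈ pcl K))

/-- the converse of Proposition 1 fails: some coobservable
language is not relatively coobservable. -/
theorem coobs_not_implies_relCoobs :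
    ∃ (E : Type) (_ : Fintype E) (LmG LG : Set (List E))
      (So1 So2 Sc1 Sc2 : Set E) (C K : Set (List E)),
      pcl LmG = LG ∧ C ⊆ LmG ∧ K ⊆ C ∧
      Coobs LG K So1 So2 Sc1 Sc2 ∧
      ¬ RelCoobs LG C K So1 So2 Sc1 Sc2 := by
  classical
  refine ⟨Bool, inferInstance, {[true],[false],[false,true]}, pcl {[true],[false],[false,true]},
    ∅, ∅, {true}, ∅, {[true],[false]}, {[true]}, rfl, ?_, ?_, ?_, ?_⟩
  · intro x hx; simp only [Set.mem_insert_iff, Set.mem_singleton_iff] at hx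
    rcases hx with h | h <;> simp [h]
  · intro x hx; simp at hx; simp [hx]
  · intro s s' s'' _ _
    refine ⟨?_, ?_, ?_⟩
    · intro σ hσ; simp at hσ
    · intro σ hσ
      simp only [Set.mem_diff, Set.mem_singleton_iff] at hσ
      rcases hσ with ⟨rfl, -⟩
      rintro ⟨-, ⟨t, ht, hpre⟩, ⟨u, hu, hpre2⟩⟩
      simp only [Set.mem_singleton_iff] at ht
      subst ht
      -- s is a prefix of [true]: s = [] or s = [true]
      have hs : s = [] ∨ s = [true] := by
        rcases hpre with ⟨r, hr⟩
        cases s with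
        | nil => left; rfl
        | cons b bs =>
          cases bs with
          | nil => right; simp_all
          | cons c cs => simp at hr
      rcases hs with rfl | rfl
      · exact ⟨[true], rfl, by simp⟩
      · exfalso
        -- [true, true] ∈ pcl LmG is false
        simp only [Set.mem_insert_iff, Set.mem_singleton_iff] at hu
        rcases hu with rfl | rfl | rfl <;> rcases hpre2 with ⟨r, hr⟩ <;> simp_all
    · intro σ hσ; simp at hσ
  · intro h
    have := h [false] [] []
    simp only [natProj, List.filter, Set.mem_empty_iff_false, decide_eq_true_eq] at this
    have h2 := (this (by simp [natProj]) (by simp [natProj])).2.1 true (by simp)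
    have h3 : [false] ++ [true] ∈ pcl ({[true]} : Set (List Bool)) := by
      apply h2
      refine ⟨⟨[true], rfl, by simp⟩, ⟨[false], by simp, by simp⟩, ⟨[false,true], by simp, by simp⟩⟩
    rcases h3 with ⟨t, ht, hpre⟩
    simp only [Set.mem_singleton_iff] at ht
    subst ht
    rcases hpre with ⟨r, hr⟩
    simp at hr
end

section
/- The converse of Proposition 2 fails: there exist a finite alphabet Σ, a plant G (languages L_m(G), L(G) with L̄_m(G) = L(G)), observable event subsets Σ_{o,1}, Σ_{o,2} ⊆ Σ with natural projections P₁, P₂, controllable event subsets Σ_{c,1}, Σ_{c,2} ⊆ Σ, an ambient language C ⊆ L_m(G), and a language K ⊆ C such that K is disjunctively coobservable with respect to G, P₁, P₂, Σ_{c,1}, Σ_{c,2} but K is not C̄-coobservable. -/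
/-! Languages over a finite alphabet `α`: strings are `List α`.
`So1, So2` are the observable event subsets `Σ_{o,1}, Σ_{o,2}`;
`Sc1, Sc2` are the controllable event subsets `Σ_{c,1}, Σ_{c,2}`. -/

variable {α : Type*}

/-- `K` is disjunctively coobservable w.r.t. `LG`, `P₁`, `P₂`, `Sc1`, `Sc2`. -/
def DisjCoobs (LG K : Set (List α)) (So1 So2 Sc1 Sc2 : Set α) : Prop :=
  ∀ s s' s'' : List α,
    natProj So1 s = natProj So1 s' → natProj So2 s = natProj So2 s'' →
    ((∀ σ ∈ Sc1 ∩ Sc2,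
        s' ++ [σ] ∈ LG \ pcl K ∧ s'' ++ [σ] ∈ LG \ pcl K ∧
          s ∈ pcl K ∧ s ++ [σ] ∈ LG → s ++ [σ] ∈ LG \ pcl K) ∧
     (∀ σ ∈ Sc1 \ Sc2,
        s' ++ [σ] ∈ LG \ pcl K ∧ s ∈ pcl K ∧ s ++ [σ] ∈ LG → s ++ [σ] ∈ LG \ pcl K) ∧
     (∀ σ ∈ Sc2 \ Sc1,
        s'' ++ [σ] ∈ LG \ pcl K ∧ s ∈ pcl K ∧ s ++ [σ] ∈ LG → s ++ [σ] ∈ LG \ pcl K))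

/-! Encode `Σ = {a, b}` as `Bool` with `a = true`, `b = false`. Both agents control `a`; agent 1
observes nothing and agent 2 observes `b`. Take `L_m(G) = {a, b, ba}`, `C = {a, b}` and `K = {a}`.

`K` is not `C̄`-coobservable: agent 1 cannot tell `b` from `ε`, after which `a` is allowed, yet
`b ∈ C̄`, `ba ∈ L(G)` and `ba ∉ K̄`. It is disjunctively coobservable because an illegal `a`
can only follow `b`, and a legal one only follows a prefix of `a`, so agent 2 always tells them
apart. -/

theorem subset_pcl (L : Set (List α)) : L ⊆ pcl L :=
  fun t ht => ⟨t, ht, List.prefix_refl t⟩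

@[simp]
theorem mem_pcl_insert {s t : List α} {L : Set (List α)} :
    s ∈ pcl (insert t L) ↔ s <+: t ∨ s ∈ pcl L := by
  simp [pcl]

@[simp]
theorem mem_pcl_singleton {s t : List α} : s ∈ pcl {t} ↔ s <+: t := by
  simp [pcl]

@[simp]
theorem natProj_nil (A : Set α) : natProj A [] = [] := rfl

@[simp]
theorem natProj_cons_of_mem {A : Set α} {a : α} (h : a ∈ A) (s : List α) :
    natProj A (a :: s) = a :: natProj A s := by
  simp [natProj, h]

@[simp]
theorem natProj_cons_of_notMem {A : Set α} {a : α} (h : a ∉ A) (s : List α) :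
    natProj A (a :: s) = natProj A s := by
  simp [natProj, h]

theorem List.IsPrefix.natProj {s t : List α} (h : s <+: t) (A : Set α) :
    natProj A s <+: natProj A t :=
  h.filter _

section Coobservability

variable {LG C K : Set (List α)} {So1 So2 Sc1 Sc2 : Set α}

theorem RelCoobs.mem_pcl_of_natProj_eq (h : RelCoobs LG C K So1 So2 Sc1 Sc2)
    {σ : α} (hσ : σ ∈ Sc1) {s s' : List α} (hP : natProj So1 s = natProj So1 s')
    (hs'K : s' ++ [σ] ∈ pcl K) (hsC : s ∈ pcl C) (hsG : s ++ [σ] ∈ LG) :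
    s ++ [σ] ∈ pcl K := by
  obtain ⟨hboth, honly1, -⟩ := h s s' s hP rfl
  by_cases hσ₂ : σ ∈ Sc2
  · exact (hboth σ ⟨hσ, hσ₂⟩).1 ⟨hs'K, hsC, hsG⟩
  · exact honly1 σ ⟨hσ, hσ₂⟩ ⟨hs'K, hsC, hsG⟩

theorem disjCoobs_of_forall_natProj_ne (hSc : Sc1 ⊆ Sc2)
    (h : ∀ σ ∈ Sc2, ∀ s t : List α, s ∈ pcl K → t ++ [σ] ∈ LG \ pcl K →
      natProj So2 s ≠ natProj So2 t) :
    DisjCoobs LG K So1 So2 Sc1 Sc2 := by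
  intro s s' s'' _ hP₂
  refine ⟨?_, ?_, ?_⟩
  · rintro σ ⟨-, hσ⟩ ⟨-, hs'', hs, -⟩
    exact absurd hP₂ (h σ hσ s s'' hs hs'')
  · rintro σ ⟨hσ₁, hσ₂⟩
    exact absurd (hSc hσ₁) hσ₂
  · rintro σ ⟨hσ, -⟩ ⟨hs'', hs, -⟩
    exact absurd hP₂ (h σ hσ s s'' hs hs'')

end Coobservability

/-- the converse of Proposition 2 fails: some disjunctively
coobservable language is not relatively coobservable. -/
theorem disjCoobs_not_implies_relCoobs :
    ∃ (E : Type) (_ : Fintype E) (LmG LG : Set (List E))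
      (So1 So2 Sc1 Sc2 : Set E) (C K : Set (List E)),
      pcl LmG = LG ∧ C ⊆ LmG ∧ K ⊆ C ∧
      DisjCoobs LG K So1 So2 Sc1 Sc2 ∧
      ¬ RelCoobs LG C K So1 So2 Sc1 Sc2 := by
  refine ⟨Bool, inferInstance, {[true], [false], [false, true]}, _, ∅, {false}, {true}, {true},
    {[true], [false]}, {[true]}, rfl, by simp [Set.insert_subset_iff], by simp, ?_, ?_⟩
  · refine disjCoobs_of_forall_natProj_ne subset_rfl ?_
    rintro σ rfl s t hs ht
    have hs_blind : natProj {false} s = [] := by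
      simpa using (mem_pcl_singleton.1 hs).natProj {false}
    have ht_b : t = [false] := by
      simp only [Set.mem_sdiff, mem_pcl_insert, mem_pcl_singleton] at ht
      rcases t with _ | ⟨x, _ | ⟨y, t⟩⟩ <;> simp_all
    simp [hs_blind, ht_b]
  · intro h
    have hba : [false, true] ∈ pcl {[true]} :=
      h.mem_pcl_of_natProj_eq (s := [false]) (s' := []) rfl (by simp) (by simp) (by simp) (by simp)
    simp at hba
end
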